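/- The function r(t) = (1/π)(√(1−t²) + tπ/2 + t·arcsin t) maps [−1,1] into [−1,1], is monotonically increasing on [−1,1], satisfies r(t) ≥ t for all t ∈ [−1,1], and has t = 1 as its unique fixed point on [−1,1]. -/

import Mathlib

open Real Set

/-- The ReLU correlation map. -/
noncomputable def rmap (t : ℝ) : ℝ :=
  (1 / π) * (Real.sqrt (1 - t ^ 2) + t * π / 2 + t * Real.arcsin t)

lemma rmap_hasDerivAt {t : ℝ} (ht : t ∈ Ioo (-1 : ℝ) 1) :
    HasDerivAt rmap ((π / 2 + Real.arcsin t) / π) t := by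
  have h1 : t ≠ -1 := ne_of_gt ht.1
  have h2 : t ≠ 1 := ne_of_lt ht.2
  have hs : (0 : ℝ) < 1 - t ^ 2 := by nlinarith [ht.1, ht.2]
  have hsq : Real.sqrt (1 - t ^ 2) ≠ 0 := by positivity
  have d1 : HasDerivAt (fun t : ℝ => Real.sqrt (1 - t ^ 2))
      ((-(2 * t)) / (2 * Real.sqrt (1 - t ^ 2))) t := by
    have : HasDerivAt (fun t : ℝ => 1 - t ^ 2) (-(2 * t)) t := by
      simpa using ((hasDerivAt_pow 2 t).const_sub 1)
    simpa [Function.comp_def, mul_comm, div_eq_mul_inv, mul_assoc, mul_left_comm] using ((Real.hasDerivAt_sqrt hs.ne').comp t this)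
  have d2 : HasDerivAt (fun t : ℝ => t * π / 2) (π / 2) t := by
    simpa using ((hasDerivAt_id t).mul_const π).div_const 2
  have d3 : HasDerivAt (fun t : ℝ => t * Real.arcsin t)
      (1 * Real.arcsin t + t * (1 / Real.sqrt (1 - t ^ 2))) t :=
    (hasDerivAt_id t).mul (Real.hasDerivAt_arcsin h1 h2)
  have := (((d1.add d2).add d3).const_mul (1 / π))
  refine this.congr_deriv ?_
  field_simp
  ring
lemma rmap_one : rmap 1 = 1 := by
  have hπ : π ≠ 0 := Real.pi_ne_zero
  simp [rmap, Real.arcsin_one]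
lemma rmap_neg_one : rmap (-1) = 0 := by
  unfold rmap
  rw [Real.arcsin_neg_one]
  norm_num [Real.sqrt_zero]
  ring
lemma rmap_contOn : ContinuousOn rmap (Icc (-1 : ℝ) 1) := by
  apply ContinuousOn.mul continuousOn_const
  exact (((continuous_const.sub (continuous_pow 2)).sqrt.add
    ((continuous_id.mul continuous_const).div_const 2)).add
    (continuous_id.mul Real.continuous_arcsin)).continuousOn

lemma rmap_strictMonoOn : StrictMonoOn rmap (Icc (-1 : ℝ) 1) := by
  apply strictMonoOn_of_deriv_pos (convex_Icc _ _) rmap_contOn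
  intro x hx
  rw [interior_Icc] at hx
  rw [(rmap_hasDerivAt hx).deriv]
  have h1 : -(π / 2) < Real.arcsin x := Real.neg_pi_div_two_lt_arcsin.2 hx.1
  have := Real.pi_pos
  apply div_pos (by linarith) Real.pi_pos

lemma gmap_strictAntiOn : StrictAntiOn (fun t => rmap t - t) (Icc (-1 : ℝ) 1) := by
  apply strictAntiOn_of_deriv_neg (convex_Icc _ _) (rmap_contOn.sub (continuous_id.continuousOn))
  intro x hx
  show deriv (fun t => rmap t - t) x < 0
  rw [interior_Icc] at hx
  have hd : HasDerivAt (fun t => rmap t - t) ((π / 2 + Real.arcsin x) / π - 1) x :=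
    (rmap_hasDerivAt hx).sub (hasDerivAt_id x)
  rw [hd.deriv]
  have h1 : Real.arcsin x < π / 2 := Real.arcsin_lt_pi_div_two.2 hx.2
  have hπ := Real.pi_pos
  rw [sub_neg, div_lt_one hπ]
  linarith

/-- `r` maps `[-1,1]` into `[-1,1]`, is monotonically increasing on `[-1,1]`,
satisfies `r(t) ≥ t` on `[-1,1]`, and has `t = 1` as its unique fixed point on `[-1,1]`. -/
theorem rmap_properties :
    (∀ t ∈ Icc (-1 : ℝ) 1, rmap t ∈ Icc (-1 : ℝ) 1) ∧
    MonotoneOn rmap (Icc (-1 : ℝ) 1) ∧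
    (∀ t ∈ Icc (-1 : ℝ) 1, t ≤ rmap t) ∧
    (∀ t ∈ Icc (-1 : ℝ) 1, rmap t = t ↔ t = 1) := by
  have hmem1 : (1 : ℝ) ∈ Icc (-1 : ℝ) 1 := by constructor <;> norm_num
  have hmemn : (-1 : ℝ) ∈ Icc (-1 : ℝ) 1 := by constructor <;> norm_num
  have hge : ∀ t ∈ Icc (-1 : ℝ) 1, t ≤ rmap t := by
    intro t ht
    rcases eq_or_lt_of_le ht.2 with h | h
    · subst h; rw [rmap_one]
    · have := gmap_strictAntiOn ht hmem1 h
      simp only [rmap_one] at this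
      linarith
  refine ⟨?_, rmap_strictMonoOn.monotoneOn, hge, ?_⟩
  · intro t ht
    constructor
    · have := rmap_strictMonoOn.monotoneOn hmemn ht ht.1
      rw [rmap_neg_one] at this; linarith
    · have := rmap_strictMonoOn.monotoneOn ht hmem1 ht.2
      rw [rmap_one] at this; linarith
  · intro t ht
    constructor
    · intro h
      by_contra hne
      have hlt : t < 1 := lt_of_le_of_ne ht.2 hne
      have := gmap_strictAntiOn ht hmem1 hlt
      simp only [rmap_one, h] at this
      linarith
    · rintro rfl; exact rmap_one
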